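/- Let F be a field of characteristic p > 0 and β ∈ F^× not a p-th power. Let D' ⊆ P(1,1,p) be the curve in the weighted projective plane Proj F[X,Y,T] (deg X = deg Y = 1, deg T = p) defined by the irreducible homogeneous equation T^p − β(X^p − βY^p)^p = 0 of degree p². Then h⁰(O_{D'}) = 1 and h¹(O_{D'}) = (p³ − p² − 2p + 2)/2. In particular for p = 2, h⁰(O_{D'}) = h¹(O_{D'}) = 1. -/

import Mathlib

noncomputable section

set_option synthInstance.maxHeartbeats 400000
set_option maxHeartbeats 1000000

open MvPolynomial

/-- The affine equation of the peculiar curve `D' ⊆ P(1,1,p)` on the chart `Y ≠ 0`: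
`t^p − β(x^p − β)^p`, with `x = X 0`, `t = X 1`. -/
def qChartY (F : Type*) [Field F] (p : ℕ) (β : F) : MvPolynomial (Fin 2) F :=
  X 1 ^ p - C β * (X 0 ^ p - C β) ^ p

/-- The affine equation of `D'` on the chart `X ≠ 0`: `t'^p − β(1 − βx'^p)^p`,
with `x' = X 0`, `t' = X 1`. -/
def qChartX (F : Type*) [Field F] (p : ℕ) (β : F) : MvPolynomial (Fin 2) F :=
  X 1 ^ p - C β * (1 - C β * X 0 ^ p) ^ p

/-- The coordinate ring of `D' ∩ D₊(Y)`. -/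
def ChartY (F : Type*) [Field F] (p : ℕ) (β : F) : Type _ :=
  MvPolynomial (Fin 2) F ⧸ Ideal.span {qChartY F p β}

instance (F : Type*) [Field F] (p : ℕ) (β : F) : CommRing (ChartY F p β) :=
  inferInstanceAs (CommRing (MvPolynomial (Fin 2) F ⧸ Ideal.span {qChartY F p β}))

instance (F : Type*) [Field F] (p : ℕ) (β : F) : Algebra F (ChartY F p β) :=
  inferInstanceAs (Algebra F (MvPolynomial (Fin 2) F ⧸ Ideal.span {qChartY F p β}))

/-- The coordinate ring of `D' ∩ D₊(X)`. -/
def ChartX (F : Type*) [Field F] (p : ℕ) (β : F) : Type _ :=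
  MvPolynomial (Fin 2) F ⧸ Ideal.span {qChartX F p β}

instance (F : Type*) [Field F] (p : ℕ) (β : F) : CommRing (ChartX F p β) :=
  inferInstanceAs (CommRing (MvPolynomial (Fin 2) F ⧸ Ideal.span {qChartX F p β}))

instance (F : Type*) [Field F] (p : ℕ) (β : F) : Algebra F (ChartX F p β) :=
  inferInstanceAs (Algebra F (MvPolynomial (Fin 2) F ⧸ Ideal.span {qChartX F p β}))

/-- The quotient map onto the chart ring `ChartY`. -/
def mkY (F : Type*) [Field F] (p : ℕ) (β : F) :
    MvPolynomial (Fin 2) F →+* ChartY F p β :=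
  Ideal.Quotient.mk (Ideal.span {qChartY F p β})

/-- The quotient map onto the chart ring `ChartX`. -/
def mkX' (F : Type*) [Field F] (p : ℕ) (β : F) :
    MvPolynomial (Fin 2) F →+* ChartX F p β :=
  Ideal.Quotient.mk (Ideal.span {qChartX F p β})

/-- The class of `x` in the chart ring `ChartY`. -/
def xbar (F : Type*) [Field F] (p : ℕ) (β : F) : ChartY F p β := mkY F p β (X 0)

/-- The class of `t` in the chart ring `ChartY`. -/
def tbar (F : Type*) [Field F] (p : ℕ) (β : F) : ChartY F p β := mkY F p β (X 1)

/-- The coordinate ring of the overlap `D' ∩ D₊(X) ∩ D₊(Y)`, obtained from `ChartY` by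
inverting `x`. -/
def Overlap (F : Type*) [Field F] (p : ℕ) (β : F) : Type _ :=
  Localization.Away (xbar F p β)

instance (F : Type*) [Field F] (p : ℕ) (β : F) : CommRing (Overlap F p β) :=
  inferInstanceAs (CommRing (Localization.Away (xbar F p β)))

instance (F : Type*) [Field F] (p : ℕ) (β : F) : Algebra (ChartY F p β) (Overlap F p β) :=
  inferInstanceAs (Algebra (ChartY F p β) (Localization.Away (xbar F p β)))

noncomputable instance (F : Type*) [Field F] (p : ℕ) (β : F) :
    Algebra F (Overlap F p β) :=
  ((algebraMap (ChartY F p β) (Overlap F p β)).comp (algebraMap F (ChartY F p β))).toAlgebra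

/-!
On the chart `Y ≠ 0` the curve is `t ^ p = a(x)` with `a = β (x ^ p - β) ^ p`; as `β` is not a
`p`-th power, neither is `a` in `F(x)`, so the equation is irreducible. Both chart rings and the
overlap `F[x, x⁻¹][t] / (t ^ p - a)` are free over `F` on monomials `xᵐ tʲ` (`j < p`, with `m ≥ 0`
on the charts and `m ∈ ℤ` on the overlap). Restriction from `D₊(Y)` keeps `xⁱ tʲ`, and restriction
from `D₊(X)` sends `x'ⁱ t'ʲ` to `x⁻ⁱ⁻ᵖʲ tʲ`. The two images are therefore spanned by the monomials
with `m ≥ 0`, resp. `m + p j ≤ 0`: they meet only in the constants, and the cokernel has the basis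
`xᵐ tʲ` with `-p j < m < 0`, of which there are `∑_{j < p} (p j - 1)⁺ = (p³ - p² - 2p + 2) / 2`.
-/

open scoped Polynomial

namespace Module.Basis

variable {R M M' N ι ι' κ : Type*} [Ring R] [AddCommGroup M] [AddCommGroup M'] [AddCommGroup N]
  [Module R M] [Module R M'] [Module R N] {f : M →ₗ[R] N} {g : M' →ₗ[R] N} {σ : ι → κ} {τ : ι' → κ}

theorem injective_of_apply_eq (b : Basis ι R M) (c : Basis κ R N) (hσ : σ.Injective)
    (hf : ∀ i, f (b i) = c (σ i)) : Function.Injective f :=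
  LinearMap.injective_of_linearIndependent b.span_eq <| by
    simpa only [Function.comp_def, hf] using c.linearIndependent.comp σ hσ

theorem range_eq_span_image_of_apply_eq (b : Basis ι R M) (c : Basis κ R N)
    (hf : ∀ i, f (b i) = c (σ i)) : LinearMap.range f = Submodule.span R (c '' Set.range σ) := by
  rw [LinearMap.range_eq_map, ← b.span_eq, Submodule.map_span, ← Set.range_comp, ← Set.range_comp]
  simp only [Function.comp_def, hf]

theorem span_image_inf_span_image (c : Basis κ R N) (s t : Set κ) :
    Submodule.span R (c '' s) ⊓ Submodule.span R (c '' t) = Submodule.span R (c '' (s ∩ t)) := by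
  ext
  simp only [Submodule.mem_inf, mem_span_image, Set.subset_inter_iff]

theorem finrank_quotient_span_image [StrongRankCondition R] (c : Basis κ R N) (s : Set κ) :
    Module.finrank R (N ⧸ Submodule.span R (c '' s)) = Nat.card ↥sᶜ := by
  have hrepr : (Submodule.span R (c '' s)).map c.repr.toLinearMap = Finsupp.supported R R s := by
    rw [Submodule.map_span, Finsupp.supported_eq_span_single, Set.image_image]
    simp
  have hcompl : IsCompl (Finsupp.supported R R s) (Finsupp.supported R R sᶜ) :=
    ⟨Finsupp.disjoint_supported_supported disjoint_compl_right, by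
      rw [codisjoint_iff, ← Finsupp.supported_union, Set.union_compl_self, Finsupp.supported_univ]⟩
  let e := (Submodule.Quotient.equiv _ _ c.repr hrepr).trans <|
    (Submodule.quotientEquivOfIsCompl _ _ hcompl).trans (Finsupp.supportedEquivFinsupp sᶜ)
  exact finrank_eq_nat_card_basis (Finsupp.basisSingleOne.map e.symm)

theorem apply_eq_apply_iff (b : Basis ι R M) (b' : Basis ι' R M') (c : Basis κ R N)
    (hσ : σ.Injective) (hτ : τ.Injective) (hf : ∀ i, f (b i) = c (σ i))
    (hg : ∀ i, g (b' i) = c (τ i)) {i₀ : ι} {i₀' : ι'} (h₀ : τ i₀' = σ i₀)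
    (hinter : Set.range σ ∩ Set.range τ = {σ i₀}) (m : M) (m' : M') :
    f m = g m' ↔ ∃ a : R, a • b i₀ = m ∧ a • b' i₀' = m' := by
  constructor
  · intro h
    have hmem : f m ∈ Submodule.span R {c (σ i₀)} := by
      rw [← Set.image_singleton, ← hinter, ← span_image_inf_span_image,
        ← range_eq_span_image_of_apply_eq b c hf, ← range_eq_span_image_of_apply_eq b' c hg]
      exact ⟨⟨m, rfl⟩, ⟨m', h.symm⟩⟩
    obtain ⟨a, ha⟩ := Submodule.mem_span_singleton.mp hmem
    refine ⟨a, injective_of_apply_eq b c hσ hf ?_, injective_of_apply_eq b' c hτ hg ?_⟩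
    · rw [map_smul, hf, ha]
    · rw [map_smul, hg, h₀, ha, h]
  · rintro ⟨a, rfl, rfl⟩
    rw [map_smul, map_smul, hf, hg, h₀]

theorem finrank_quotient_range_sup_range [StrongRankCondition R] (b : Basis ι R M)
    (b' : Basis ι' R M') (c : Basis κ R N) (hf : ∀ i, f (b i) = c (σ i))
    (hg : ∀ i, g (b' i) = c (τ i)) :
    Module.finrank R (N ⧸ (LinearMap.range f ⊔ LinearMap.range g)) =
      Nat.card ↥(Set.range σ ∪ Set.range τ)ᶜ := by
  rw [range_eq_span_image_of_apply_eq b c hf, range_eq_span_image_of_apply_eq b' c hg,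
    ← Submodule.span_union, ← Set.image_union, finrank_quotient_span_image]

end Module.Basis

namespace AdjoinRoot

variable {K R ι : Type*} [CommRing K] [CommRing R] [Nontrivial R] [Algebra K R] (n : ℕ) [NeZero n]

def basisXPowSubC (b : Module.Basis ι K R) (a : R) :
    Module.Basis (Fin n × ι) K (AdjoinRoot (Polynomial.X ^ n - Polynomial.C a)) :=
  b.smulTower' ((powerBasis' (Polynomial.monic_X_pow_sub_C a (NeZero.ne n))).basis.reindex
    (finCongr Polynomial.natDegree_X_pow_sub_C))

theorem basisXPowSubC_apply (b : Module.Basis ι K R) (a : R) (j : Fin n) (i : ι) :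
    basisXPowSubC n b a (j, i) = of _ (b i) * root _ ^ (j : ℕ) := by
  simp only [basisXPowSubC, Module.Basis.smulTower'_apply, Module.Basis.coe_reindex,
    PowerBasis.coe_basis, powerBasis'_gen, Function.comp_apply, Algebra.smul_def,
    AdjoinRoot.algebraMap_eq]
  rfl

end AdjoinRoot

section Irreducibility

open Polynomial (monic_X_pow_sub_C leadingCoeff leadingCoeff_pow leadingCoeff_mul leadingCoeff_C)

variable {K : Type*} [Field K]

theorem RatFunc.pow_ne_algebraMap {n : ℕ} {β : K} (hβ : ∀ γ : K, γ ^ n ≠ β) (c : RatFunc K) :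
    c ^ n ≠ algebraMap K (RatFunc K) β := by
  intro h
  have hdenom : algebraMap K[X] (RatFunc K) c.denom ≠ 0 := by simpa using c.denom_ne_zero
  have hc : algebraMap K[X] (RatFunc K) c.num = c * algebraMap K[X] (RatFunc K) c.denom :=
    (div_eq_iff hdenom).mp c.num_div_denom
  have hnum : c.num ^ n = Polynomial.C β * c.denom ^ n := by
    apply IsFractionRing.injective K[X] (RatFunc K)
    rw [map_pow, hc, mul_pow, h, map_mul, map_pow, RatFunc.algebraMap_C, RatFunc.algebraMap_eq_C]
  have hlead := congrArg leadingCoeff hnum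
  rw [leadingCoeff_pow, leadingCoeff_mul, leadingCoeff_pow, leadingCoeff_C,
    c.monic_denom.leadingCoeff, one_pow, mul_one] at hlead
  exact hβ _ hlead

-- By Gauss's lemma it suffices that `β g ^ p` is not a `p`-th power in `K(x)`.
theorem irreducible_X_pow_sub_C_C_mul_pow {p : ℕ} (hp : p.Prime) {β : K}
    (hβ : ∀ γ : K, γ ^ p ≠ β) {g : K[X]} (hg : g ≠ 0) :
    Irreducible (Polynomial.X ^ p - Polynomial.C (Polynomial.C β * g ^ p) : K[X][X]) := by
  rw [(monic_X_pow_sub_C _ hp.ne_zero).irreducible_iff_irreducible_map_fraction_map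
    (K := RatFunc K)]
  simp only [Polynomial.map_sub, Polynomial.map_pow, Polynomial.map_X, Polynomial.map_C]
  refine X_pow_sub_C_irreducible_of_prime hp fun b hb => ?_
  have hg' : algebraMap K[X] (RatFunc K) g ≠ 0 := by simpa using hg
  apply RatFunc.pow_ne_algebraMap hβ (b / algebraMap K[X] (RatFunc K) g)
  rw [div_pow, hb, map_mul, map_pow, RatFunc.algebraMap_C, RatFunc.algebraMap_eq_C]
  field_simp

end Irreducibility

namespace PeculiarCurve

section Indices

variable (p : ℕ)

def chartYIndex (k : Fin p × ℕ) : Fin p × ℤ := (k.1, k.2)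

def chartXIndex (k : Fin p × ℕ) : Fin p × ℤ := (k.1, -k.2 - p * (k.1 : ℕ))

theorem chartYIndex_injective : (chartYIndex p).Injective := by
  rintro ⟨j, i⟩ ⟨j', i'⟩ h
  simp_all [chartYIndex]

theorem chartXIndex_injective : (chartXIndex p).Injective := by
  rintro ⟨j, i⟩ ⟨j', i'⟩ h
  simp only [chartXIndex, Prod.mk.injEq] at h
  obtain ⟨rfl, h⟩ := h
  simp_all

theorem range_chartYIndex_inter_range_chartXIndex [NeZero p] :
    Set.range (chartYIndex p) ∩ Set.range (chartXIndex p) = {chartYIndex p (0, 0)} := by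
  ext ⟨j, m⟩
  simp only [Set.mem_inter_iff, Set.mem_range, chartYIndex, chartXIndex, Prod.mk.injEq,
    Set.mem_singleton_iff, Prod.exists]
  constructor
  · rintro ⟨⟨_, i, rfl, rfl⟩, ⟨j, i', rfl, h⟩⟩
    have hp : (0 : ℤ) < p := by exact_mod_cast Nat.pos_of_ne_zero (NeZero.ne p)
    have hpj : (0 : ℤ) ≤ p * (j : ℕ) := by positivity
    have hj : (p : ℤ) * (j : ℕ) = 0 := by omega
    refine ⟨Fin.ext ?_, by omega⟩
    simpa using (mul_eq_zero.mp hj).resolve_left hp.ne'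
  · rintro ⟨rfl, rfl⟩
    exact ⟨⟨0, 0, rfl, rfl⟩, ⟨0, 0, rfl, by simp⟩⟩

theorem compl_range_chartYIndex_union_range_chartXIndex :
    (Set.range (chartYIndex p) ∪ Set.range (chartXIndex p))ᶜ =
      {k | k.2 ∈ Set.Ioo (-(p * (k.1 : ℕ) : ℤ)) 0} := by
  ext ⟨j, m⟩
  simp only [Set.mem_compl_iff, Set.mem_union, Set.mem_range, chartYIndex, chartXIndex,
    Prod.mk.injEq, Prod.exists, Set.mem_ofPred_eq, Set.mem_Ioo, not_or, not_exists, not_and]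
  constructor
  · rintro ⟨hY, hX⟩
    refine ⟨?_, ?_⟩
    · by_contra! h
      exact hX j (-m - p * (j : ℕ)).toNat rfl (by omega)
    · by_contra! h
      exact hY j m.toNat rfl (by omega)
  · rintro ⟨h₁, h₂⟩
    exact ⟨fun _ i _ hi => by omega, fun _ i hj hi => by subst hj; omega⟩

theorem two_mul_sum_range_mul_sub_one [NeZero p] (n : ℕ) (hn : 1 ≤ n) :
    2 * ((∑ j ∈ Finset.range n, (p * j - 1) : ℕ) : ℤ) = p * n * (n - 1) - 2 * (n - 1) := by
  induction n, hn using Nat.le_induction with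
  | base => simp
  | succ n hn ih =>
    have hpn : 1 ≤ p * n := Nat.one_le_iff_ne_zero.mpr (mul_ne_zero (NeZero.ne p) (by omega))
    rw [Finset.sum_range_succ, Nat.cast_add, mul_add, ih, Nat.cast_sub hpn]
    push_cast
    ring

theorem two_mul_card_compl_range_union [NeZero p] :
    (2 * Nat.card ↥(Set.range (chartYIndex p) ∪ Set.range (chartXIndex p))ᶜ : ℤ) =
      (p : ℤ) ^ 3 - (p : ℤ) ^ 2 - 2 * p + 2 := by
  have e : ↥{k : Fin p × ℤ | k.2 ∈ Set.Ioo (-(p * (k.1 : ℕ) : ℤ)) 0} ≃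
      Σ j : Fin p, Set.Ioo (-(p * (j : ℕ) : ℤ)) 0 :=
    Equiv.subtypeProdEquivSigmaSubtype fun (j : Fin p) (m : ℤ) =>
      m ∈ Set.Ioo (-(p * (j : ℕ) : ℤ)) 0
  rw [compl_range_chartYIndex_union_range_chartXIndex, Nat.card_congr e, Nat.card_sigma]
  simp only [Nat.card_eq_fintype_card, Fintype.card_ofFinset, Int.card_Ioo, sub_neg_eq_add,
    zero_add, Int.pred_toNat, ← Nat.cast_mul, Int.toNat_natCast]
  rw [Fin.sum_univ_eq_sum_range (fun j => p * j - 1) p,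
    two_mul_sum_range_mul_sub_one p p (Nat.one_le_iff_ne_zero.mpr (NeZero.ne p))]
  ring

end Indices

section Charts

variable (F : Type*) [Field F]

def polyPolyEquiv : MvPolynomial (Fin 2) F ≃ₐ[F] F[X][X] :=
  (renameEquiv F (Equiv.swap 0 1)).trans <|
    (finSuccEquiv F 1).trans (Polynomial.mapAlgEquiv (uniqueAlgEquiv F (Fin 1)))

@[simp]
theorem polyPolyEquiv_X_zero : polyPolyEquiv F (X 0) = Polynomial.C Polynomial.X := by
  have h : Equiv.swap (0 : Fin 2) 1 0 = (0 : Fin 1).succ := Equiv.swap_apply_left 0 1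
  rw [polyPolyEquiv, AlgEquiv.trans_apply, renameEquiv_apply, rename_X, h, AlgEquiv.trans_apply,
    finSuccEquiv_X_succ]
  simp

@[simp]
theorem polyPolyEquiv_X_one : polyPolyEquiv F (X 1) = Polynomial.X := by
  simp [polyPolyEquiv, finSuccEquiv_X_zero]

@[simp]
theorem polyPolyEquiv_C (c : F) :
    polyPolyEquiv F (C c) = Polynomial.C (Polynomial.C c) :=
  (polyPolyEquiv F).commutes c

variable (p : ℕ) (β : F)

def radicandY : F[X] := Polynomial.C β * (Polynomial.X ^ p - Polynomial.C β) ^ p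

def radicandX : F[X] := Polynomial.C β * (1 - Polynomial.C β * Polynomial.X ^ p) ^ p

theorem polyPolyEquiv_qChartY :
    polyPolyEquiv F (qChartY F p β) = Polynomial.X ^ p - Polynomial.C (radicandY F p β) := by
  simp [qChartY, radicandY]

theorem polyPolyEquiv_qChartX :
    polyPolyEquiv F (qChartX F p β) = Polynomial.X ^ p - Polynomial.C (radicandX F p β) := by
  simp [qChartX, radicandX]

theorem irreducible_qChartY [Fact p.Prime] (hβ : ∀ γ : F, γ ^ p ≠ β) :
    Irreducible (qChartY F p β) := by
  have hp : p.Prime := Fact.out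
  refine (MulEquiv.irreducible_iff (polyPolyEquiv F)).mp ?_
  change Irreducible (polyPolyEquiv F (qChartY F p β))
  rw [polyPolyEquiv_qChartY]
  exact irreducible_X_pow_sub_C_C_mul_pow hp hβ (Polynomial.X_pow_sub_C_ne_zero hp.pos β)

def chartYEquiv :
    ChartY F p β ≃ₐ[F] AdjoinRoot (Polynomial.X ^ p - Polynomial.C (radicandY F p β)) :=
  Ideal.quotientEquivAlg _ _ (polyPolyEquiv F) <| by
    simp [Ideal.map_span, polyPolyEquiv_qChartY]

def chartXEquiv :
    ChartX F p β ≃ₐ[F] AdjoinRoot (Polynomial.X ^ p - Polynomial.C (radicandX F p β)) :=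
  Ideal.quotientEquivAlg _ _ (polyPolyEquiv F) <| by
    simp [Ideal.map_span, polyPolyEquiv_qChartX]

theorem chartYEquiv_mkY (q : MvPolynomial (Fin 2) F) :
    chartYEquiv F p β (mkY F p β q) = AdjoinRoot.mk _ (polyPolyEquiv F q) :=
  Ideal.quotientEquivAlg_mk _ _ _ q

theorem chartXEquiv_mkX' (q : MvPolynomial (Fin 2) F) :
    chartXEquiv F p β (mkX' F p β q) = AdjoinRoot.mk _ (polyPolyEquiv F q) :=
  Ideal.quotientEquivAlg_mk _ _ _ q

variable [NeZero p]

def basisChartY : Module.Basis (Fin p × ℕ) F (ChartY F p β) :=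
  (AdjoinRoot.basisXPowSubC p (Polynomial.basisMonomials F) _).map
    (chartYEquiv F p β).symm.toLinearEquiv

theorem basisChartY_apply (j : Fin p) (i : ℕ) :
    basisChartY F p β (j, i) = xbar F p β ^ i * tbar F p β ^ (j : ℕ) := by
  rw [basisChartY, Module.Basis.map_apply, AlgEquiv.toLinearEquiv_apply, AlgEquiv.symm_apply_eq,
    xbar, tbar, ← map_pow, ← map_pow, ← map_mul, chartYEquiv_mkY]
  simp [AdjoinRoot.basisXPowSubC_apply, ← Polynomial.X_pow_eq_monomial]

def basisChartX : Module.Basis (Fin p × ℕ) F (ChartX F p β) :=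
  (AdjoinRoot.basisXPowSubC p (Polynomial.basisMonomials F) _).map
    (chartXEquiv F p β).symm.toLinearEquiv

theorem basisChartX_apply (j : Fin p) (i : ℕ) :
    basisChartX F p β (j, i) = mkX' F p β (X 0) ^ i * mkX' F p β (X 1) ^ (j : ℕ) := by
  rw [basisChartX, Module.Basis.map_apply, AlgEquiv.toLinearEquiv_apply, AlgEquiv.symm_apply_eq,
    ← map_pow, ← map_pow, ← map_mul, chartXEquiv_mkX']
  simp [AdjoinRoot.basisXPowSubC_apply, ← Polynomial.X_pow_eq_monomial]

end Charts

section Overlap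

open LaurentPolynomial (T)

variable (F : Type*) [Field F] (p : ℕ) (β : F)

instance : IsLocalization.Away (xbar F p β) (Overlap F p β) :=
  inferInstanceAs (IsLocalization.Away (xbar F p β) (Localization.Away (xbar F p β)))

instance : IsScalarTower F (ChartY F p β) (Overlap F p β) :=
  IsScalarTower.of_algebraMap_eq' rfl

def xUnit : (Overlap F p β)ˣ := (IsLocalization.Away.algebraMap_isUnit (xbar F p β)).unit

theorem val_xUnit : (xUnit F p β : Overlap F p β) = algebraMap _ _ (xbar F p β) :=
  IsUnit.unit_spec _

theorem mkY_C (c : F) : mkY F p β (C c) = algebraMap F _ c := rfl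

theorem tbar_pow : tbar F p β ^ p =
    algebraMap F _ β * (xbar F p β ^ p - algebraMap F _ β) ^ p := by
  rw [← sub_eq_zero]
  have h : mkY F p β (qChartY F p β) = 0 :=
    Ideal.Quotient.eq_zero_iff_mem.mpr (Ideal.mem_span_singleton_self _)
  simpa [qChartY, xbar, tbar, mkY_C] using h

abbrev LaurentModel : Type _ :=
  AdjoinRoot (Polynomial.X ^ p - Polynomial.C (Polynomial.toLaurent (radicandY F p β)))

def laurentModelToOverlap : LaurentModel F p β →+* Overlap F p β :=
  AdjoinRoot.lift (LaurentPolynomial.eval₂ (algebraMap F (Overlap F p β)) (xUnit F p β))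
    (algebraMap _ _ (tbar F p β)) <| by
      rw [Polynomial.eval₂_sub, Polynomial.eval₂_X_pow, Polynomial.eval₂_C,
        LaurentPolynomial.eval₂_toLaurent, ← map_pow, tbar_pow, sub_eq_zero]
      simp [radicandY, val_xUnit, IsScalarTower.algebraMap_apply F (ChartY F p β) (Overlap F p β)]

def chartYToLaurentModel : ChartY F p β →+* LaurentModel F p β :=
  (AdjoinRoot.map Polynomial.toLaurent _ _ (by simp)).comp (chartYEquiv F p β).toRingHom

theorem chartYEquiv_xbar : chartYEquiv F p β (xbar F p β) = AdjoinRoot.of _ Polynomial.X := by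
  rw [xbar, chartYEquiv_mkY, polyPolyEquiv_X_zero, AdjoinRoot.mk_C]

theorem chartYEquiv_tbar : chartYEquiv F p β (tbar F p β) = AdjoinRoot.root _ := by
  rw [tbar, chartYEquiv_mkY, polyPolyEquiv_X_one, AdjoinRoot.mk_X]

theorem chartYToLaurentModel_algebraMap (c : F) :
    chartYToLaurentModel F p β (algebraMap F _ c) = AdjoinRoot.of _ (LaurentPolynomial.C c) := by
  simp [chartYToLaurentModel, IsScalarTower.algebraMap_apply F F[X] (AdjoinRoot _)]

theorem chartYToLaurentModel_xbar :
    chartYToLaurentModel F p β (xbar F p β) = AdjoinRoot.of _ (T 1) := by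
  simp [chartYToLaurentModel, chartYEquiv_xbar]

theorem chartYToLaurentModel_tbar :
    chartYToLaurentModel F p β (tbar F p β) = AdjoinRoot.root _ := by
  simp [chartYToLaurentModel, chartYEquiv_tbar]

def overlapToLaurentModel : Overlap F p β →+* LaurentModel F p β :=
  IsLocalization.Away.lift (xbar F p β) (g := chartYToLaurentModel F p β) <| by
    rw [chartYToLaurentModel_xbar]
    exact (LaurentPolynomial.isUnit_T 1).map _

theorem overlapToLaurentModel_algebraMap (a : ChartY F p β) :
    overlapToLaurentModel F p β (algebraMap _ _ a) = chartYToLaurentModel F p β a :=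
  IsLocalization.Away.lift_eq _ _ a

theorem laurentModelToOverlap_of (f : LaurentPolynomial F) :
    laurentModelToOverlap F p β (AdjoinRoot.of _ f) =
      LaurentPolynomial.eval₂ (algebraMap F (Overlap F p β)) (xUnit F p β) f :=
  AdjoinRoot.lift_of _

theorem laurentModelToOverlap_root :
    laurentModelToOverlap F p β (AdjoinRoot.root _) = algebraMap _ _ (tbar F p β) :=
  AdjoinRoot.lift_root _

theorem laurentModelToOverlap_comp_overlapToLaurentModel :
    (laurentModelToOverlap F p β).comp (overlapToLaurentModel F p β) = RingHom.id _ := by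
  apply IsLocalization.ringHom_ext (Submonoid.powers (xbar F p β))
  rw [RingHom.comp_assoc, overlapToLaurentModel, IsLocalization.Away.lift_comp]
  apply Ideal.Quotient.ringHom_ext
  apply MvPolynomial.ringHom_ext
  · intro c
    change laurentModelToOverlap F p β (chartYToLaurentModel F p β (algebraMap F _ c)) =
      algebraMap _ (Overlap F p β) (algebraMap F (ChartY F p β) c)
    rw [chartYToLaurentModel_algebraMap, laurentModelToOverlap_of, LaurentPolynomial.eval₂_C,
      ← IsScalarTower.algebraMap_apply]
  · intro i
    fin_cases i
    · change laurentModelToOverlap F p β (chartYToLaurentModel F p β (xbar F p β)) =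
        algebraMap _ (Overlap F p β) (xbar F p β)
      rw [chartYToLaurentModel_xbar, laurentModelToOverlap_of, LaurentPolynomial.eval₂_T,
        zpow_one, val_xUnit]
    · change laurentModelToOverlap F p β (chartYToLaurentModel F p β (tbar F p β)) =
        algebraMap _ (Overlap F p β) (tbar F p β)
      rw [chartYToLaurentModel_tbar, laurentModelToOverlap_root]

theorem overlapToLaurentModel_comp_laurentModelToOverlap :
    (overlapToLaurentModel F p β).comp (laurentModelToOverlap F p β) = RingHom.id _ := by
  apply AdjoinRoot.ringHom_ext
  · apply IsLocalization.ringHom_ext (Submonoid.powers (Polynomial.X : F[X]))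
    apply Polynomial.ringHom_ext
    · intro c
      simp [laurentModelToOverlap_of, overlapToLaurentModel_algebraMap,
        IsScalarTower.algebraMap_apply F (ChartY F p β) (Overlap F p β),
        chartYToLaurentModel_algebraMap]
    · simp [laurentModelToOverlap_of, val_xUnit, overlapToLaurentModel_algebraMap,
        chartYToLaurentModel_xbar]
  · simp [laurentModelToOverlap_root, overlapToLaurentModel_algebraMap, chartYToLaurentModel_tbar]

def laurentModelEquiv : LaurentModel F p β ≃ₐ[F] Overlap F p β :=
  AlgEquiv.ofRingEquiv (f := RingEquiv.ofRingHom (laurentModelToOverlap F p β)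
    (overlapToLaurentModel F p β) (laurentModelToOverlap_comp_overlapToLaurentModel F p β)
    (overlapToLaurentModel_comp_laurentModelToOverlap F p β)) fun c => by
      simp [IsScalarTower.algebraMap_apply F (LaurentPolynomial F) (LaurentModel F p β),
        laurentModelToOverlap_of]

theorem laurentModelEquiv_apply (z : LaurentModel F p β) :
    laurentModelEquiv F p β z = laurentModelToOverlap F p β z :=
  rfl

variable [NeZero p]

def basisOverlap : Module.Basis (Fin p × ℤ) F (Overlap F p β) :=
  (AdjoinRoot.basisXPowSubC p (AddMonoidAlgebra.basis ℤ F) _).map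
    (laurentModelEquiv F p β).toLinearEquiv

theorem basisOverlap_apply (j : Fin p) (m : ℤ) :
    basisOverlap F p β (j, m) = (xUnit F p β ^ m : (Overlap F p β)ˣ) *
      algebraMap _ _ (tbar F p β) ^ (j : ℕ) := by
  rw [basisOverlap, Module.Basis.map_apply, AdjoinRoot.basisXPowSubC_apply,
    AlgEquiv.toLinearEquiv_apply, laurentModelEquiv_apply, map_mul, map_pow,
    laurentModelToOverlap_of, laurentModelToOverlap_root]
  exact congrArg (· * _) (LaurentPolynomial.eval₂_T _ _ m)

theorem algebraMap_basisChartY (k : Fin p × ℕ) :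
    algebraMap (ChartY F p β) (Overlap F p β) (basisChartY F p β k) =
      basisOverlap F p β (chartYIndex p k) := by
  obtain ⟨j, i⟩ := k
  rw [chartYIndex, basisChartY_apply, basisOverlap_apply, map_mul, map_pow, map_pow, zpow_natCast,
    Units.val_pow_eq_pow_val, val_xUnit]

theorem map_basisChartX (ψ : ChartX F p β →+* Overlap F p β)
    (hx : ψ (mkX' F p β (X 0)) * algebraMap _ _ (xbar F p β) = 1)
    (ht : ψ (mkX' F p β (X 1)) * algebraMap _ _ (xbar F p β) ^ p = algebraMap _ _ (tbar F p β))
    (k : Fin p × ℕ) :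
    ψ (basisChartX F p β k) = basisOverlap F p β (chartXIndex p k) := by
  obtain ⟨j, i⟩ := k
  set u := xUnit F p β
  have hx' : ψ (mkX' F p β (X 0)) = ↑u⁻¹ :=
    Units.eq_inv_of_mul_eq_one_right (by rwa [val_xUnit])
  have ht' : ψ (mkX' F p β (X 1)) = algebraMap _ _ (tbar F p β) * ↑(u ^ p)⁻¹ := by
    rw [← ht, ← val_xUnit, ← Units.val_pow_eq_pow_val, Units.mul_inv_cancel_right]
  have hu : u⁻¹ ^ i * (u ^ p)⁻¹ ^ (j : ℕ) = u ^ (-i - p * (j : ℕ) : ℤ) := by group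
  rw [chartXIndex, basisChartX_apply, basisOverlap_apply, map_mul, map_pow, map_pow, hx', ht',
    mul_pow, ← hu, Units.val_mul, Units.val_pow_eq_pow_val, Units.val_pow_eq_pow_val]
  ring

end Overlap

end PeculiarCurve

open PeculiarCurve in
/-- `H⁰` and `H¹` of `O_{D'}` are computed by the Čech complex of the cover `D₊(Y), D₊(X)`:
`H⁰` is the equalizer of the two restrictions to the overlap and `H¹` the cokernel of their
difference. `ψ` is the restriction from `D₊(X)`, pinned down by `x' ↦ x⁻¹` and `t' ↦ t x⁻ᵖ`. -/
theorem peculiar_curve_cohomology_general (F : Type*) [Field F] (p : ℕ) [Fact p.Prime]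
    (β : F) (hβ : ∀ γ : F, γ ^ p ≠ β) :
    Irreducible (qChartY F p β) ∧
    ∀ ψ : ChartX F p β →+* Overlap F p β,
      (∀ c : F, ψ (algebraMap F (ChartX F p β) c) = algebraMap F (Overlap F p β) c) →
      (ψ (mkX' F p β (X 0)) *
        algebraMap (ChartY F p β) (Overlap F p β) (xbar F p β) = 1) →
      (ψ (mkX' F p β (X 1)) *
        algebraMap (ChartY F p β) (Overlap F p β) (xbar F p β) ^ p =
          algebraMap (ChartY F p β) (Overlap F p β) (tbar F p β)) →
      -- h⁰(O_{D'}) = 1 :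
      ({z : ChartY F p β × ChartX F p β |
          algebraMap (ChartY F p β) (Overlap F p β) z.1 = ψ z.2} =
        Set.range (fun c : F =>
          (algebraMap F (ChartY F p β) c, algebraMap F (ChartX F p β) c))) ∧
      -- h¹(O_{D'}) = (p³ − p² − 2p + 2)/2 :
      ∀ (ρL : ChartY F p β →ₗ[F] Overlap F p β) (ψL : ChartX F p β →ₗ[F] Overlap F p β),
        (∀ a, ρL a = algebraMap (ChartY F p β) (Overlap F p β) a) →
        (∀ a, ψL a = ψ a) →
        (2 * (Module.finrank F
          ((Overlap F p β) ⧸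
            (LinearMap.range ρL ⊔ LinearMap.range ψL : Submodule F (Overlap F p β)))) : ℤ) =
            (p : ℤ) ^ 3 - (p : ℤ) ^ 2 - 2 * p + 2 := by
  refine ⟨irreducible_qChartY F p β hβ, fun ψ hψc hψx hψt => ?_⟩
  have hρ := algebraMap_basisChartY F p β
  have hψ := map_basisChartX F p β ψ hψx hψt
  refine ⟨?_, fun ρL ψL hρL hψL => ?_⟩
  · have key := (basisChartY F p β).apply_eq_apply_iff (basisChartX F p β) (basisOverlap F p β)
      (f := (IsScalarTower.toAlgHom F _ _).toLinearMap)
      (g := ({ ψ with commutes' := hψc } : ChartX F p β →ₐ[F] Overlap F p β).toLinearMap)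
      (chartYIndex_injective p) (chartXIndex_injective p) hρ hψ (i₀ := (0, 0)) (i₀' := (0, 0))
      (by simp [chartYIndex, chartXIndex]) (range_chartYIndex_inter_range_chartXIndex p)
    ext z
    refine (key z.1 z.2).trans ?_
    simp [basisChartY_apply, basisChartX_apply, Prod.ext_iff, Algebra.algebraMap_eq_smul_one]
  · rw [(basisChartY F p β).finrank_quotient_range_sup_range (basisChartX F p β)
      (basisOverlap F p β) (fun k => (hρL _).trans (hρ k)) (fun k => (hψL _).trans (hψ k))]
    exact two_mul_card_compl_range_union p

/-- Let `F` be a field of characteristic `p > 0` and `β ∈ F^×` not a `p`-th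
power.  Let `D' ⊆ P(1,1,p) = Proj F[X,Y,T]` (`deg X = deg Y = 1`, `deg T = p`) be the curve
defined by the irreducible homogeneous equation `T^p − β(X^p − βY^p)^p = 0` of degree `p²`.
Then `h⁰(O_{D'}) = 1` and `h¹(O_{D'}) = (p³ − p² − 2p + 2)/2` (so for `p = 2` both equal `1`).
The cohomology is computed by the Čech complex of the affine cover `D₊(X), D₊(Y)`: `H⁰`, the
equalizer of the two restriction maps to the overlap, is exactly the line of constants `F`,
and `H¹`, the cokernel of their difference, has `F`-dimension `(p³ − p² − 2p + 2)/2`.  Here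
`ψ` is the map identifying the chart `D₊(X)` inside the overlap, determined by
`x' ↦ x⁻¹` and `t' ↦ t·x⁻ᵖ`. -/
theorem peculiar_curve_cohomology (F : Type*) [Field F] (p : ℕ) [Fact p.Prime] [CharP F p]
    (β : F) (hβ0 : β ≠ 0) (hβ : ∀ γ : F, γ ^ p ≠ β) :
    Irreducible (qChartY F p β) ∧
    ∀ ψ : ChartX F p β →+* Overlap F p β,
      (∀ c : F, ψ (algebraMap F (ChartX F p β) c) = algebraMap F (Overlap F p β) c) →
      (ψ (mkX' F p β (X 0)) *
        algebraMap (ChartY F p β) (Overlap F p β) (xbar F p β) = 1) →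
      (ψ (mkX' F p β (X 1)) *
        algebraMap (ChartY F p β) (Overlap F p β) (xbar F p β) ^ p =
          algebraMap (ChartY F p β) (Overlap F p β) (tbar F p β)) →
      -- h⁰(O_{D'}) = 1 :
      ({z : ChartY F p β × ChartX F p β |
          algebraMap (ChartY F p β) (Overlap F p β) z.1 = ψ z.2} =
        Set.range (fun c : F =>
          (algebraMap F (ChartY F p β) c, algebraMap F (ChartX F p β) c))) ∧
      -- h¹(O_{D'}) = (p³ − p² − 2p + 2)/2 :
      ∀ (ρL : ChartY F p β →ₗ[F] Overlap F p β) (ψL : ChartX F p β →ₗ[F] Overlap F p β),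
        (∀ a, ρL a = algebraMap (ChartY F p β) (Overlap F p β) a) →
        (∀ a, ψL a = ψ a) →
        (2 * (Module.finrank F
          ((Overlap F p β) ⧸
            (LinearMap.range ρL ⊔ LinearMap.range ψL : Submodule F (Overlap F p β)))) : ℤ) =
            (p : ℤ) ^ 3 - (p : ℤ) ^ 2 - 2 * p + 2 :=
  peculiar_curve_cohomology_general F p β hβ
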